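/- For all n ≥ 1, M₁(n) ≤ √(3n) + 4. -/

import Mathlib

/-- The domain of a partial word (a list over `Option A`, where `none` is the hole):
the set of positions carrying a letter. -/
def PartialWord.domain {A : Type*} (w : List (Option A)) : Finset ℕ :=
  (Finset.range w.length).filter fun i => (w.getD i none).isSome

/-- Two partial words are compatible if they have the same length and agree on the
intersection of their domains. -/
def PartialWord.Compatible {A : Type*} (w v : List (Option A)) : Prop :=
  w.length = v.length ∧
    ∀ i ∈ PartialWord.domain w ∩ PartialWord.domain v, w.getD i none = v.getD i none

/-- A partial word is unbordered if no nonempty proper prefix is compatible with a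
suffix of the same length. -/
def PartialWord.Unbordered {A : Type*} (w : List (Option A)) : Prop :=
  ∀ x y : List (Option A), x <+: w → y <:+ w → x ≠ [] → x.length < w.length →
    x.length = y.length → ¬ PartialWord.Compatible x y

/-- The number of holes of a partial word. -/
def PartialWord.holes {A : Type*} (w : List (Option A)) : ℕ :=
  w.countP fun x => x.isNone

/-- `u` repeated `t` times. -/
def listPow {α : Type*} (u : List α) (t : ℕ) : List α := (List.replicate t u).flatten

/-- A complete sparse ruler of length `n`. -/
def IsCompleteRuler (n : ℕ) (R : Finset ℕ) : Prop :=
  (∀ x ∈ R, x ≤ n) ∧ 0 ∈ R ∧ n ∈ R ∧ ∀ d ≤ n, ∃ r ∈ R, ∃ s ∈ R, r = s + d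

/-- Minimum number of marks of a complete sparse ruler of length `n`. -/
noncomputable def M1 (n : ℕ) : ℕ :=
  sInf {k | ∃ R : Finset ℕ, IsCompleteRuler n R ∧ R.card = k}

/-- Maximum number of holes an unbordered partial word of length `n` over an alphabet
of size `k` can have. -/
noncomputable def HB (k n : ℕ) : ℕ :=
  sSup {h | ∃ w : List (Option (Fin k)),
    w.length = n ∧ PartialWord.Unbordered w ∧ PartialWord.holes w = h}

/-- The ruler (set of partial sums) given by a difference representation. -/
def rulerOfDiffs (D : List ℕ) : Finset ℕ :=
  ((List.range (D.length + 1)).map fun t => (D.take t).sum).toFinset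

/-- The difference representation of the extended Wichmann ruler `w₁(r,s,i,j)`. -/
def wichmannDiffs (r s i j : ℕ) : List ℕ :=
  List.replicate r 1 ++ [r + 1] ++ List.replicate r (2 * r + 1) ++
    List.replicate s (4 * r + 3) ++ List.replicate (r + 1) (2 * r + 2) ++
    List.replicate r 1 ++ List.replicate i (r + 1) ++ [j]

/-- A complete two-dimensional sparse ruler: an `(n,m)`-ruler. -/
def IsRuler2 (n m : ℕ) (R : Finset (ℕ × ℕ)) : Prop :=
  (∀ p ∈ R, p.1 < n ∧ p.2 < m) ∧
    ∀ x y : ℤ, |x| ≤ (n : ℤ) - 1 → |y| ≤ (m : ℤ) - 1 →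
      ∃ p ∈ R, ∃ q ∈ R, (p.1 : ℤ) - (q.1 : ℤ) = x ∧ (p.2 : ℤ) - (q.2 : ℤ) = y

/-- Minimum number of marks of an `(n,m)`-ruler. -/
noncomputable def M2 (n m : ℕ) : ℕ :=
  sInf {k | ∃ R : Finset (ℕ × ℕ), IsRuler2 n m R ∧ R.card = k}

/-- The domain of an `n` by `m` two-dimensional partial word. -/
def domain2 {A : Type*} (n m : ℕ) (w : ℕ × ℕ → Option A) : Finset (ℕ × ℕ) :=
  (Finset.range n ×ˢ Finset.range m).filter fun p => (w p).isSome

/-- An `n` by `m` two-dimensional partial word is unbordered if its domain is an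
`(n,m)`-ruler and every nonzero measurable vector can be measured between two
positions carrying distinct letters. -/
def Unbordered2 {A : Type*} (n m : ℕ) (w : ℕ × ℕ → Option A) : Prop :=
  IsRuler2 n m (domain2 n m w) ∧
    ∀ x y : ℤ, |x| ≤ (n : ℤ) - 1 → |y| ≤ (m : ℤ) - 1 → ¬(x = 0 ∧ y = 0) →
      ∃ p ∈ domain2 n m w, ∃ q ∈ domain2 n m w,
        (p.1 : ℤ) - (q.1 : ℤ) = x ∧ (p.2 : ℤ) - (q.2 : ℤ) = y ∧ w p ≠ w q

/-- Number of holes of an `n` by `m` two-dimensional partial word. -/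
def holes2 {A : Type*} (n m : ℕ) (w : ℕ × ℕ → Option A) : ℕ :=
  n * m - (domain2 n m w).card

/-- Maximum number of holes an unbordered `n` by `m` two-dimensional partial word
over an alphabet of size `k` can have. -/
noncomputable def HB2 (k n m : ℕ) : ℕ :=
  sSup {h | ∃ w : ℕ × ℕ → Option (Fin k), Unbordered2 n m w ∧ holes2 n m w = h}

/-! An extended Wichmann ruler `W r s i j` (with `j ≤ r`) is complete, has length
`(r+1+s)(4r+3) + r + i(r+1) + j` and at most `4r + s + i + 4` marks; completeness is a case
analysis on where a distance falls relative to the long blocks of equal gaps `2r+1`, `4r+3`,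
`2r+2`, each distance being a difference of marks from two blocks or a mark minus a short one
from `{0, …, r}`. Choosing `r` with `(6r+1)² ≤ 3n < (6r+7)²`, every `n ≥ 3` is such a length with
`(r+1)i < 4r+3`, and then `(4r+s+i)² ≤ 3n`. -/

open Finset

namespace SparseRuler

def Covers (R : Finset ℕ) (d : ℕ) : Prop := ∃ p ∈ R, ∃ q ∈ R, p = q + d

lemma covers_of_mem {R : Finset ℕ} {d : ℕ} (h0 : 0 ∈ R) (hd : d ∈ R) : Covers R d :=
  ⟨d, hd, 0, h0, (zero_add d).symm⟩

lemma M1_le_card {n : ℕ} {R : Finset ℕ} (h : IsCompleteRuler n R) : M1 n ≤ #R :=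
  Nat.sInf_le ⟨R, h, rfl⟩

lemma M1_le_succ (n : ℕ) : M1 n ≤ n + 1 := by
  have hR : IsCompleteRuler n (range (n + 1)) := by
    refine ⟨fun x hx => ?_, by simp, by simp,
      fun d hd => ⟨d, ?_, 0, by simp, (zero_add d).symm⟩⟩
    · simp only [mem_range] at hx; omega
    · simp only [mem_range]; omega
  simpa using M1_le_card hR

def progression (a d len : ℕ) : Finset ℕ := (range len).image fun k => a + (k + 1) * d

section Progression

variable {a d len k x : ℕ}

lemma add_mul_mem_progression (h1 : 1 ≤ k) (h2 : k ≤ len) : a + k * d ∈ progression a d len :=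
  mem_image.2 ⟨k - 1, mem_range.2 (by omega), by rw [Nat.sub_add_cancel h1]⟩

lemma le_of_mem_progression (hx : x ∈ progression a d len) : x ≤ a + len * d := by
  obtain ⟨k, hk, rfl⟩ := mem_image.1 hx
  have : (k + 1) * d ≤ len * d := Nat.mul_le_mul_right d (mem_range.1 hk)
  omega

lemma card_progression_le : #(progression a d len) ≤ len :=
  card_image_le.trans (card_range len).le

end Progression

/-- `W r s i j` is the set of partial sums of `wichmannDiffs r s i j`: its seven blocks are the
marks traced by the successive runs of equal differences. Blocks 2, 3, 4 end at
`c0 = (r+1)(2r+1)`, `d0 = c0 + s(4r+3)` and `e0 = (r+1+s)(4r+3)`. -/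
def W (r s i j : ℕ) : Finset ℕ :=
  range (r + 1) ∪ progression 0 (2 * r + 1) (r + 1) ∪
    progression ((r + 1) * (2 * r + 1)) (4 * r + 3) s ∪
    progression ((r + 1) * (2 * r + 1) + s * (4 * r + 3)) (2 * r + 2) (r + 1) ∪
    progression ((r + 1 + s) * (4 * r + 3)) 1 r ∪
    progression ((r + 1 + s) * (4 * r + 3) + r) (r + 1) i ∪
    {(r + 1 + s) * (4 * r + 3) + r + i * (r + 1) + j}

section Wichmann

variable {r s i j : ℕ}

lemma mem_W_block1 {a : ℕ} (h : a ≤ r) : a ∈ W r s i j := by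
  simp only [W, mem_union, mem_range]
  omega

lemma zero_mem_W : 0 ∈ W r s i j := mem_W_block1 (Nat.zero_le r)

lemma mem_W_block2 {m : ℕ} (h : m ≤ r + 1) : m * (2 * r + 1) ∈ W r s i j := by
  rcases Nat.eq_zero_or_pos m with rfl | hm
  · simpa using zero_mem_W
  · have hp := add_mul_mem_progression (a := 0) (d := 2 * r + 1) hm h
    rw [zero_add] at hp
    simp only [W, mem_union]
    tauto

lemma mem_W_block3 {k : ℕ} (h : k ≤ s) :
    (r + 1) * (2 * r + 1) + k * (4 * r + 3) ∈ W r s i j := by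
  rcases Nat.eq_zero_or_pos k with rfl | hk
  · simpa using mem_W_block2 (le_refl (r + 1))
  · have hp := add_mul_mem_progression (a := (r + 1) * (2 * r + 1)) (d := 4 * r + 3) hk h
    simp only [W, mem_union]
    tauto

lemma mem_W_block4 {m : ℕ} (h : m ≤ r + 1) :
    (r + 1) * (2 * r + 1) + s * (4 * r + 3) + m * (2 * r + 2) ∈ W r s i j := by
  rcases Nat.eq_zero_or_pos m with rfl | hm
  · simpa using mem_W_block3 (le_refl s)
  · have hp := add_mul_mem_progression
      (a := (r + 1) * (2 * r + 1) + s * (4 * r + 3)) (d := 2 * r + 2) hm h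
    simp only [W, mem_union]
    tauto

lemma mem_W_block5 {t : ℕ} (h : t ≤ r) : (r + 1 + s) * (4 * r + 3) + t ∈ W r s i j := by
  rcases Nat.eq_zero_or_pos t with rfl | ht
  · convert mem_W_block4 (le_refl (r + 1)) using 1
    ring
  · have hp := add_mul_mem_progression (a := (r + 1 + s) * (4 * r + 3)) (d := 1) ht h
    rw [mul_one] at hp
    simp only [W, mem_union]
    tauto

lemma mem_W_block6 {k : ℕ} (h : k ≤ i) :
    (r + 1 + s) * (4 * r + 3) + r + k * (r + 1) ∈ W r s i j := by
  rcases Nat.eq_zero_or_pos k with rfl | hk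
  · simpa using mem_W_block5 (le_refl r)
  · have hp := add_mul_mem_progression (a := (r + 1 + s) * (4 * r + 3) + r) (d := r + 1) hk h
    simp only [W, mem_union]
    tauto

lemma mem_W_block7 : (r + 1 + s) * (4 * r + 3) + r + i * (r + 1) + j ∈ W r s i j := by
  simp [W]

lemma card_W_le : #(W r s i j) ≤ 4 * r + s + i + 4 := by
  unfold W
  grw [card_union_le, card_union_le, card_union_le, card_union_le, card_union_le, card_union_le,
    card_range, card_progression_le, card_progression_le, card_progression_le,
    card_progression_le, card_progression_le, card_singleton]
  omega

lemma le_of_mem_W {x : ℕ} (hx : x ∈ W r s i j) :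
    x ≤ (r + 1 + s) * (4 * r + 3) + r + i * (r + 1) + j := by
  have e : (r + 1 + s) * (4 * r + 3) =
      (r + 1) * (2 * r + 1) + s * (4 * r + 3) + (r + 1) * (2 * r + 2) := by ring
  simp only [W, mem_union, mem_range, mem_singleton] at hx
  rcases hx with (((((h | h) | h) | h) | h) | h) | rfl
  · nlinarith
  iterate 5
    · have := le_of_mem_progression h
      nlinarith
  · rfl

lemma covers_W_of_le_add_r {p d : ℕ} (hp : p ∈ W r s i j) (h1 : d ≤ p) (h2 : p ≤ d + r) :
    Covers (W r s i j) d :=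
  ⟨p, hp, p - d, mem_W_block1 (by omega), by omega⟩

lemma covers_W_mul_add {m u : ℕ} (hm : m ≤ r + 1) (hu : u ≤ r) :
    Covers (W r s i j) (m * (2 * r + 1) + u) := by
  by_cases hum : m ≤ u
  · exact ⟨_, mem_W_block5 (t := u - m) (by omega), _, mem_W_block4 (m := r + 1 - m) (by omega),
      by zify [hum, hm]; ring⟩
  by_cases hDC : m - u ≤ s ∧ m ≤ 2 * u
  · exact ⟨_, mem_W_block4 (m := 2 * u - m) (by omega), _,
      mem_W_block3 (k := s - (m - u)) (by omega),
      by zify [hDC.1, hDC.2, (not_le.1 hum).le]; ring⟩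
  by_cases hus : u ≤ s
  · exact ⟨_, mem_W_block3 hus, _, mem_W_block2 (m := r + 1 + 2 * u - m) (by omega),
      by zify [show m ≤ r + 1 + 2 * u by omega]; ring⟩
  · exact ⟨_, mem_W_block4 (m := u - s) (by omega), _,
      mem_W_block2 (m := r + 1 + s + u - m) (by omega),
      by zify [show s ≤ u by omega, show m ≤ r + 1 + s + u by omega]; ring⟩

lemma covers_W_of_le_c0 {d : ℕ} (hd : d ≤ (r + 1) * (2 * r + 1)) : Covers (W r s i j) d := by
  obtain ⟨m, u, rfl, hu⟩ : ∃ m u, d = m * (2 * r + 1) + u ∧ u < 2 * r + 1 :=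
    ⟨d / (2 * r + 1), d % (2 * r + 1), (Nat.div_add_mod' d _).symm, Nat.mod_lt _ (by omega)⟩
  have hm : m ≤ r + 1 := by nlinarith
  by_cases hur : r + 1 ≤ u
  · have : m ≤ r := by nlinarith
    exact covers_W_of_le_add_r (mem_W_block2 (m := m + 1) (by omega)) (by nlinarith) (by nlinarith)
  exact covers_W_mul_add hm (by omega)

lemma covers_W_block3_add_of_le_r {k w : ℕ} (hks : k < s) (hw : w ≤ r) :
    Covers (W r s i j) ((r + 1) * (2 * r + 1) + k * (4 * r + 3) + w) := by
  obtain ⟨g, rfl⟩ : ∃ g, s = k + g := ⟨s - k, by omega⟩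
  by_cases hCB : w ≤ g ∧ 2 * w ≤ r + 1
  · exact ⟨_, mem_W_block3 (k := k + w) (by omega), _, mem_W_block2 (m := 2 * w) hCB.2,
      by ring⟩
  by_cases hDC : r + 2 ≤ w + g
  · exact ⟨_, mem_W_block4 (m := 2 * w - (r + 1)) (by omega), _,
      mem_W_block3 (k := g - (r + 1 - w)) (by omega),
      by zify [show r + 1 ≤ 2 * w by omega, show r + 1 - w ≤ g by omega, hw.trans r.le_succ]
         ring⟩
  · exact ⟨_, mem_W_block4 (m := w - g) (by omega), _, mem_W_block2 (m := w + g) (by omega),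
      by zify [show g ≤ w by omega]; ring⟩

lemma covers_W_block3_add_two_mul_add_two {k v : ℕ} (hks : k < s) (hv : v ≤ r) :
    Covers (W r s i j) ((r + 1) * (2 * r + 1) + k * (4 * r + 3) + (2 * r + 2 + v)) := by
  obtain ⟨g, rfl⟩ : ∃ g, s = k + g := ⟨s - k, by omega⟩
  by_cases hCB : v + 1 ≤ g ∧ 2 * v ≤ r
  · exact ⟨_, mem_W_block3 (k := k + v + 1) (by omega), _,
      mem_W_block2 (m := 2 * v + 1) (by omega), by ring⟩
  by_cases hDC : r + 2 ≤ v + g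
  · exact ⟨_, mem_W_block4 (m := 2 * v - r) (by omega), _,
      mem_W_block3 (k := g - (r + 1 - v)) (by omega),
      by zify [show r ≤ 2 * v by omega, show r + 1 - v ≤ g by omega, hv.trans r.le_succ]
         ring⟩
  · exact ⟨_, mem_W_block4 (m := v + 1 - g) (by omega), _, mem_W_block2 (m := v + g) (by omega),
      by zify [show g ≤ v + 1 by omega]; ring⟩

lemma covers_W_of_c0_le_of_lt_d0 {d : ℕ} (h1 : (r + 1) * (2 * r + 1) ≤ d)
    (h2 : d < (r + 1) * (2 * r + 1) + s * (4 * r + 3)) : Covers (W r s i j) d := by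
  obtain ⟨x, rfl⟩ := Nat.exists_eq_add_of_le h1
  obtain ⟨k, w, rfl, hw⟩ : ∃ k w, x = k * (4 * r + 3) + w ∧ w < 4 * r + 3 :=
    ⟨x / (4 * r + 3), x % (4 * r + 3), (Nat.div_add_mod' x _).symm, Nat.mod_lt _ (by omega)⟩
  have hks : k < s := by nlinarith
  rw [← add_assoc]
  by_cases hw1 : w ≤ r
  · exact covers_W_block3_add_of_le_r hks hw1
  by_cases hw2 : w ≤ 2 * r + 1
  · exact ⟨_, mem_W_block5 (t := w - (r + 1)) (by omega), _,
      mem_W_block3 (k := s - k) (by omega),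
      by zify [show r + 1 ≤ w by omega, hks.le]; ring⟩
  by_cases hw3 : w ≤ 3 * r + 2
  · obtain ⟨v, rfl⟩ : ∃ v, w = 2 * r + 2 + v := ⟨w - (2 * r + 2), by omega⟩
    exact covers_W_block3_add_two_mul_add_two hks (by omega)
  · exact covers_W_of_le_add_r (mem_W_block3 (k := k + 1) hks) (by nlinarith) (by nlinarith)

lemma covers_W_of_d0_le_of_lt_e0 {d : ℕ} (h1 : (r + 1) * (2 * r + 1) + s * (4 * r + 3) ≤ d)
    (h2 : d < (r + 1 + s) * (4 * r + 3)) : Covers (W r s i j) d := by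
  obtain ⟨x, rfl⟩ := Nat.exists_eq_add_of_le h1
  obtain ⟨m, v, rfl, hv⟩ : ∃ m v, x = m * (2 * r + 2) + v ∧ v < 2 * r + 2 :=
    ⟨x / (2 * r + 2), x % (2 * r + 2), (Nat.div_add_mod' x _).symm, Nat.mod_lt _ (by omega)⟩
  have hm : m ≤ r := by nlinarith
  rw [← add_assoc]
  by_cases hv1 : r + 2 ≤ v
  · exact covers_W_of_le_add_r (mem_W_block4 (m := m + 1) (by omega)) (by nlinarith) (by nlinarith)
  by_cases hmv : m + v ≤ r + 1
  · exact ⟨_, mem_W_block4 (m := m + v) hmv, _, mem_W_block2 (m := v) (by omega), by ring⟩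
  · exact ⟨_, mem_W_block5 (t := m + v - (r + 1)) (by omega), _,
      mem_W_block2 (m := r + 1 - m) (by omega),
      by zify [show r + 1 ≤ m + v by omega, show m ≤ r + 1 by omega]; ring⟩

lemma covers_W_of_e0_le (hj : j ≤ r) {d : ℕ} (h1 : (r + 1 + s) * (4 * r + 3) ≤ d)
    (h2 : d ≤ (r + 1 + s) * (4 * r + 3) + r + i * (r + 1) + j) : Covers (W r s i j) d := by
  obtain ⟨x, rfl⟩ := Nat.exists_eq_add_of_le h1
  by_cases hx : x ≤ r
  · exact covers_of_mem zero_mem_W (mem_W_block5 hx)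
  obtain ⟨k, u, rfl, hu⟩ : ∃ k u, x = r + 1 + k * (r + 1) + u ∧ u < r + 1 :=
    ⟨(x - (r + 1)) / (r + 1), (x - (r + 1)) % (r + 1),
      by have := Nat.div_add_mod' (x - (r + 1)) (r + 1); omega, Nat.mod_lt _ (by omega)⟩
  by_cases hki : k + 1 ≤ i
  · exact covers_W_of_le_add_r (mem_W_block6 hki) (by nlinarith) (by nlinarith)
  · have : i * (r + 1) ≤ k * (r + 1) := Nat.mul_le_mul_right _ (by omega)
    exact covers_W_of_le_add_r mem_W_block7 h2 (by omega)

theorem isCompleteRuler_W (hj : j ≤ r) :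
    IsCompleteRuler ((r + 1 + s) * (4 * r + 3) + r + i * (r + 1) + j) (W r s i j) := by
  refine ⟨fun x => le_of_mem_W, zero_mem_W, mem_W_block7, fun d hd => ?_⟩
  rcases le_or_gt d ((r + 1) * (2 * r + 1)) with hA | hA
  · exact covers_W_of_le_c0 hA
  rcases lt_or_ge d ((r + 1) * (2 * r + 1) + s * (4 * r + 3)) with hB | hB
  · exact covers_W_of_c0_le_of_lt_d0 hA.le hB
  rcases lt_or_ge d ((r + 1 + s) * (4 * r + 3)) with hC | hC
  · exact covers_W_of_d0_le_of_lt_e0 hB hC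
  · exact covers_W_of_e0_le hj hC hd

end Wichmann

lemma exists_six_mul_add_one_sq_le {n : ℕ} (hn : 3 ≤ n) :
    ∃ r, (6 * r + 1) ^ 2 ≤ 3 * n ∧ 3 * n < (6 * r + 7) ^ 2 := by
  have hk := Nat.sqrt_le' (3 * n)
  have hk' := Nat.lt_succ_sqrt' (3 * n)
  have h3 : 3 ≤ Nat.sqrt (3 * n) := Nat.le_sqrt'.2 (by omega)
  refine ⟨(Nat.sqrt (3 * n) - 1) / 6, ?_, ?_⟩
  · calc _ ≤ Nat.sqrt (3 * n) ^ 2 := Nat.pow_le_pow_left (by omega) 2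
      _ ≤ 3 * n := hk
  · calc 3 * n < (Nat.sqrt (3 * n) + 1) ^ 2 := hk'
      _ ≤ _ := Nat.pow_le_pow_left (by omega) 2

lemma exists_wichmann_length {n r : ℕ} (hn : 4 * r * r + 8 * r + 3 ≤ n) :
    ∃ s i j, j ≤ r ∧ (r + 1) * i ≤ 4 * r + 2 ∧
      n = (r + 1 + s) * (4 * r + 3) + r + i * (r + 1) + j := by
  obtain ⟨x, rfl⟩ := Nat.exists_eq_add_of_le hn
  have hs := Nat.div_add_mod' x (4 * r + 3)
  have hrem := Nat.mod_lt x (show 0 < 4 * r + 3 by omega)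
  have hi := Nat.div_add_mod' (x % (4 * r + 3)) (r + 1)
  have hj := Nat.mod_lt (x % (4 * r + 3)) (show 0 < r + 1 by omega)
  refine ⟨x / (4 * r + 3), x % (4 * r + 3) / (r + 1), x % (4 * r + 3) % (r + 1), by omega,
    by rw [mul_comm]; omega, ?_⟩
  nlinarith

lemma sq_le_three_mul {n r s i : ℕ} (hlow : (6 * r + 1) ^ 2 ≤ 3 * n)
    (hhigh : 3 * n < (6 * r + 7) ^ 2) (hi : (r + 1) * i ≤ 4 * r + 2)
    (hn : (r + 1 + s) * (4 * r + 3) + r + i * (r + 1) ≤ n) : (4 * r + s + i) ^ 2 ≤ 3 * n := by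
  have hi3 : i ≤ 3 := by nlinarith
  rcases le_or_gt (s + 4) (2 * r) with hs | hs
  · calc (4 * r + s + i) ^ 2 ≤ (6 * r + 1) ^ 2 := Nat.pow_le_pow_left (by omega) 2
      _ ≤ 3 * n := hlow
  · -- the upper bound on `n` confines `s` to the window `[2r - 3, 2r + 4]`, where the claim is a
    -- quadratic inequality that is nonnegative between its roots
    have hs' : s ≤ 2 * r + 4 := by nlinarith
    zify at *
    nlinarith [mul_nonneg (by linarith : (0 : ℤ) ≤ s + 3 - 2 * r)
        (by linarith : (0 : ℤ) ≤ 2 * r + 4 - s),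
      mul_nonneg (by positivity : (0 : ℤ) ≤ 4 * r + s + i) (by linarith : (0 : ℤ) ≤ 3 - i)]

lemma M1_le_of_sq_le {n m : ℕ} (hM : M1 n ≤ m + 4) (hm : m ^ 2 ≤ 3 * n) :
    (M1 n : ℝ) ≤ Real.sqrt (3 * n) + 4 := by
  have hsqrt : (m : ℝ) ≤ Real.sqrt (3 * n) := Real.le_sqrt_of_sq_le (by exact_mod_cast hm)
  have : (M1 n : ℝ) ≤ m + 4 := by exact_mod_cast hM
  linarith

end SparseRuler

open SparseRuler in
theorem M1_le_general (n : ℕ) : (M1 n : ℝ) ≤ Real.sqrt (3 * n) + 4 := by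
  rcases le_or_gt n 2 with hsmall | hlarge
  · exact M1_le_of_sq_le (m := 0) (by have := M1_le_succ n; omega) (by simp)
  obtain ⟨r, hlow, hhigh⟩ := exists_six_mul_add_one_sq_le hlarge
  have hbase : 4 * r * r + 8 * r + 3 ≤ n := by
    rcases Nat.eq_zero_or_pos r with rfl | hr <;> nlinarith
  obtain ⟨s, i, j, hj, hi, hn⟩ := exists_wichmann_length hbase
  refine M1_le_of_sq_le ?_ (sq_le_three_mul (s := s) hlow hhigh hi (by omega))
  exact (M1_le_card (hn ▸ isCompleteRuler_W hj)).trans card_W_le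

/-- For all `n ≥ 1`, `M₁(n) ≤ √(3n) + 4`. -/
theorem M1_le (n : ℕ) (hn : 1 ≤ n) : (M1 n : ℝ) ≤ Real.sqrt (3 * n) + 4 :=
  M1_le_general n
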